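/- Let α > 0, β = 1 − 1/(2α), and let θ be an irrational real number. If the Archimedean spiral lattice Γ_{α,θ} is asymptotically β-uniformly discrete, then θ is badly approximable. -/

import Mathlib

/-!
If `θ` is irrational but not badly approximable, then for every `c > 0` there are arbitrarily large
`q` with `q ‖qθ‖ < c`. Put `n = (u q)²`. The spiral points of indices `n` and `n + q` have radii
`n^α` and `(n + q)^α ≤ n^α (1 + 2α / (u² q))`, and their arguments differ by `2π ‖qθ‖` modulo `2π`,
so they are at distance at most `n^α (2α / u + 2π u q ‖qθ‖) / (u q)`. With `β = 1 - 1 / (2α)` the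
discreteness scale at `z = n^α e^{2πinθ}` is `‖z‖^β = n^α / √n = n^α / (u q)`, so taking `u` large
and then `c` small puts both points into a disc around `z` that may contain only one of them.
-/

/-- The Archimedean spiral lattice `Γ_{α,θ} = { n^α e^{2πnθi} : n ∈ ℤ, n ≥ 0 }`. -/
noncomputable def spiralLattice (α θ : ℝ) : Set ℂ :=
  {z : ℂ | ∃ n : ℕ, z = (((n : ℝ) ^ α : ℝ) : ℂ) *
    Complex.exp ((2 * Real.pi * n * θ : ℝ) * Complex.I)}

/-- `Γ` is asymptotically `β`-relatively dense. -/
def AsympRelativelyDense (β : ℝ) (Γ : Set ℂ) : Prop :=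
  ∃ r > 0, ∀ r₁ > r, ∃ M > 0, ∀ z : ℂ, M ≤ ‖z‖ →
    ∃ ζ ∈ Γ, 1 ≤ ‖ζ‖ ∧ ‖z - ζ‖ < r₁ * ‖z‖ ^ β

/-- `Γ` is asymptotically `β`-uniformly discrete. -/
def AsympUniformlyDiscrete (β : ℝ) (Γ : Set ℂ) : Prop :=
  ∃ s > 0, ∀ s₁, 0 < s₁ → s₁ < s → ∃ M > 0, ∀ z : ℂ, M ≤ ‖z‖ →
    {ζ ∈ Γ | 1 ≤ ‖ζ‖ ∧ ‖z - ζ‖ < s₁ * ‖z‖ ^ β}.Subsingleton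

/-- `θ` is badly approximable. -/
def BadlyApproximable (θ : ℝ) : Prop :=
  Irrational θ ∧ ∃ c > 0, ∀ p q : ℤ, 1 ≤ q → c ≤ (q : ℝ) * |(q : ℝ) * θ - (p : ℝ)|

open Real Filter Topology

noncomputable def spiralPoint (α θ : ℝ) (n : ℕ) : ℂ :=
  (((n : ℝ) ^ α : ℝ) : ℂ) * Complex.exp ((2 * π * n * θ : ℝ) * Complex.I)

lemma spiralPoint_mem_spiralLattice (α θ : ℝ) (n : ℕ) :
    spiralPoint α θ n ∈ spiralLattice α θ :=
  ⟨n, rfl⟩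

lemma norm_spiralPoint (α θ : ℝ) (n : ℕ) : ‖spiralPoint α θ n‖ = (n : ℝ) ^ α := by
  rw [spiralPoint, norm_mul, Complex.norm_exp_ofReal_mul_I, mul_one, Complex.norm_real,
    Real.norm_of_nonneg (by positivity)]

lemma one_le_norm_spiralPoint {α : ℝ} (hα : 0 ≤ α) (θ : ℝ) {n : ℕ} (hn : 1 ≤ n) :
    1 ≤ ‖spiralPoint α θ n‖ := by
  rw [norm_spiralPoint]
  exact one_le_rpow (by exact_mod_cast hn) hα

lemma norm_spiralPoint_strictMono {α : ℝ} (hα : 0 < α) (θ : ℝ) :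
    StrictMono fun n ↦ ‖spiralPoint α θ n‖ := fun m n hmn ↦ by
  simp only [norm_spiralPoint]
  exact rpow_lt_rpow (Nat.cast_nonneg m) (Nat.cast_lt.mpr hmn) hα

lemma norm_exp_two_pi_mul_I_sub_one_le (x : ℝ) (p : ℤ) :
    ‖Complex.exp ((2 * π * x : ℝ) * Complex.I) - 1‖ ≤ 2 * π * |x - p| := by
  have hperiodic : Complex.exp ((2 * π * x : ℝ) * Complex.I) =
      Complex.exp (Complex.I * (2 * π * (x - p) : ℝ)) := by
    rw [← mul_one (Complex.exp (Complex.I * _)), ← Complex.exp_int_mul_two_pi_mul_I p,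
      ← Complex.exp_add]
    push_cast
    ring_nf
  rw [hperiodic]
  refine norm_exp_I_mul_ofReal_sub_one_le.trans_eq ?_
  rw [Real.norm_eq_abs, abs_mul, abs_of_pos two_pi_pos]

lemma norm_spiralPoint_add_sub_le {α : ℝ} (hα : 0 ≤ α) (θ : ℝ) (n q : ℕ) (p : ℤ) :
    ‖spiralPoint α θ (n + q) - spiralPoint α θ n‖ ≤
      (((n + q : ℕ) : ℝ) ^ α - (n : ℝ) ^ α) + (n : ℝ) ^ α * (2 * π * |q * θ - p|) := by
  set e : ℕ → ℂ := fun k ↦ Complex.exp ((2 * π * k * θ : ℝ) * Complex.I)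
  have he_add : e (n + q) = e n * e q := by
    simp only [e, ← Complex.exp_add]
    congr 1
    push_cast
    ring
  have he_norm (k : ℕ) : ‖e k‖ = 1 := Complex.norm_exp_ofReal_mul_I _
  have hmono : (n : ℝ) ^ α ≤ ((n + q : ℕ) : ℝ) ^ α := by gcongr; omega
  have hsplit : spiralPoint α θ (n + q) - spiralPoint α θ n =
      (((((n + q : ℕ) : ℝ) ^ α - (n : ℝ) ^ α : ℝ)) : ℂ) * e (n + q) +
        (((n : ℝ) ^ α : ℝ) : ℂ) * e n * (e q - 1) := by
    change _ * e (n + q) - _ * e n = _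
    rw [he_add]
    push_cast
    ring
  rw [hsplit]
  refine (norm_add_le _ _).trans ?_
  rw [norm_mul, norm_mul, norm_mul, he_norm, he_norm, Complex.norm_real, Complex.norm_real,
    Real.norm_of_nonneg (sub_nonneg.mpr hmono), Real.norm_of_nonneg (by positivity), mul_one,
    mul_one]
  gcongr
  simpa [e, mul_assoc] using norm_exp_two_pi_mul_I_sub_one_le (q * θ) p

lemma add_rpow_sub_rpow_le {α x h : ℝ} (hα : 0 ≤ α) (hx : 0 < x) (hh : 0 ≤ h)
    (hαh : α * h ≤ x) :
    (x + h) ^ α - x ^ α ≤ 2 * α * (h / x) * x ^ α := by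
  set t := h / x
  have ht : 0 ≤ t := by positivity
  have hαt : |α * t| ≤ 1 := by
    rw [abs_of_nonneg (by positivity), ← mul_div_assoc, div_le_one hx]
    exact hαh
  have hfactor : x + h = x * (1 + t) := by simp only [t]; field_simp
  have hexp : (1 + t) ^ α ≤ exp (α * t) := by
    calc (1 + t) ^ α ≤ exp t ^ α := by gcongr; linarith [add_one_le_exp t]
      _ = exp (α * t) := by rw [← exp_mul, mul_comm]
  have hexp_sub : exp (α * t) - 1 ≤ 2 * (α * t) := by
    simpa [abs_of_nonneg (by positivity : 0 ≤ α * t)] using (abs_le.mp (abs_exp_sub_one_le hαt)).2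
  rw [hfactor, mul_rpow hx.le (by positivity)]
  nlinarith [rpow_nonneg hx.le α]

lemma rpow_rpow_one_sub_one_div_two_mul {x : ℝ} (hx : 0 < x) {α : ℝ} (hα : α ≠ 0) :
    (x ^ α) ^ (1 - 1 / (2 * α)) = x ^ α / √x := by
  have hexponent : α * (1 - 1 / (2 * α)) = α - 1 / 2 := by field_simp
  rw [← rpow_mul hx.le, hexponent, rpow_sub hx, sqrt_eq_rpow]

lemma exists_pos_le_mul_abs_sub_of_le {θ : ℝ} (hθ : Irrational θ) (Q : ℕ) :
    ∃ c > 0, ∀ (p : ℤ) (q : ℕ), 1 ≤ q → q ≤ Q → c ≤ q * |q * θ - p| := by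
  have hpos (q : ℕ) (hq : 1 ≤ q) : 0 < (q : ℝ) * |q * θ - round ((q : ℝ) * θ)| := by
    have hq' : (q : ℤ) ≠ 0 := by omega
    have := (hθ.intCast_mul hq').ne_int (round ((q : ℝ) * θ))
    push_cast at this
    positivity [sub_ne_zero.mpr this]
  have hsmall : ∀ᶠ c in 𝓝[>] (0 : ℝ), ∀ q ∈ Finset.Icc 1 Q,
      c < (q : ℝ) * |q * θ - round ((q : ℝ) * θ)| :=
    (Finset.Icc 1 Q).eventually_all.mpr fun q hq ↦
      nhdsWithin_le_nhds (gt_mem_nhds (hpos q (Finset.mem_Icc.mp hq).1))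
  obtain ⟨c, hc, hcpos⟩ := (hsmall.and self_mem_nhdsWithin).exists
  refine ⟨c, hcpos, fun p q hq hqQ ↦ (hc q (Finset.mem_Icc.mpr ⟨hq, hqQ⟩)).le.trans
    (mul_le_mul_of_nonneg_left (round_le _ p) q.cast_nonneg)⟩

lemma exists_lt_mul_abs_sub_of_not_badlyApproximable {θ : ℝ} (hθ : Irrational θ)
    (h : ¬ BadlyApproximable θ) {c : ℝ} (hc : 0 < c) (Q : ℕ) :
    ∃ (p : ℤ) (q : ℕ), Q < q ∧ q * |q * θ - p| < c := by
  obtain ⟨c₀, hc₀, hc₀_le⟩ := exists_pos_le_mul_abs_sub_of_le hθ Q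
  simp only [BadlyApproximable, hθ, true_and, not_exists, not_and, not_forall, not_le] at h
  obtain ⟨p, q, hq, hpq⟩ := h (min c c₀) (lt_min hc hc₀)
  lift q to ℕ using (by omega)
  push_cast at hpq
  refine ⟨p, q, lt_of_not_ge fun hqQ ↦ ?_, hpq.trans_le (min_le_left _ _)⟩
  exact (hc₀_le p q (by omega) hqQ).not_gt (hpq.trans_le (min_le_right _ _))

lemma exists_spiralPoint_add_near {α θ : ℝ} (hα : 0 < α) (hθ : Irrational θ)
    (h : ¬ BadlyApproximable θ) {s : ℝ} (hs : 0 < s) (N : ℕ) :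
    ∃ n q : ℕ, N ≤ n ∧ 0 < q ∧ ‖spiralPoint α θ (n + q) - spiralPoint α θ n‖ <
      s * ‖spiralPoint α θ n‖ ^ (1 - 1 / (2 * α)) := by
  obtain ⟨u, hu_gt⟩ := exists_nat_gt (max α (4 * α / s))
  have hαu : α < u := (le_max_left _ _).trans_lt hu_gt
  have hu_pos : (0 : ℝ) < u := hα.trans hαu
  have hu : 0 < u := Nat.cast_pos.mp hu_pos
  obtain ⟨p, q, hNq, hpq⟩ :=
    exists_lt_mul_abs_sub_of_not_badlyApproximable hθ h (c := s / (4 * π * u)) (by positivity) N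
  have hq : (1 : ℝ) ≤ q := by exact_mod_cast Nat.zero_lt_of_lt hNq
  set m : ℝ := u * q
  refine ⟨(u * q) ^ 2, q, ?_, by omega, ?_⟩
  · exact hNq.le.trans ((Nat.le_mul_of_pos_left q hu).trans (Nat.le_self_pow two_ne_zero _))
  · have hn : (((u * q) ^ 2 : ℕ) : ℝ) = m ^ 2 := by push_cast; rfl
    rw [norm_spiralPoint, hn, rpow_rpow_one_sub_one_div_two_mul (by positivity) hα.ne',
      sqrt_sq (by positivity)]
    have hαq : α * q ≤ m ^ 2 := by
      have hm : 1 ≤ m := one_le_mul_of_one_le_of_one_le (by exact_mod_cast hu) hq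
      nlinarith
    have hdrift : 2 * α / u < s / 2 := by
      rw [div_lt_iff₀ hu_pos]
      have := (le_max_right _ _).trans_lt hu_gt
      rw [div_lt_iff₀ hs] at this
      linarith
    have hrotation : 2 * π * u * (q * |q * θ - p|) < s / 2 := by
      calc 2 * π * u * (q * |q * θ - p|) < 2 * π * u * (s / (4 * π * u)) := by gcongr
        _ = s / 2 := by field_simp; ring
    calc ‖spiralPoint α θ ((u * q) ^ 2 + q) - spiralPoint α θ ((u * q) ^ 2)‖
        ≤ (((((u * q) ^ 2 + q : ℕ)) : ℝ) ^ α - (((u * q) ^ 2 : ℕ) : ℝ) ^ α) +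
            (((u * q) ^ 2 : ℕ) : ℝ) ^ α * (2 * π * |q * θ - p|) :=
          norm_spiralPoint_add_sub_le hα.le θ _ q p
      _ ≤ 2 * α * (q / m ^ 2) * (m ^ 2) ^ α + (m ^ 2) ^ α * (2 * π * |q * θ - p|) := by
          rw [Nat.cast_add, hn]
          gcongr
          exact add_rpow_sub_rpow_le hα.le (by positivity) (by positivity) hαq
      _ = (m ^ 2) ^ α / m * (2 * α / u + 2 * π * u * (q * |q * θ - p|)) := by
          simp only [m]
          field_simp
      _ < (m ^ 2) ^ α / m * s := by gcongr; linarith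
      _ = s * ((m ^ 2) ^ α / m) := mul_comm _ _

theorem spiral_uniformly_discrete_implies_badly_approx (α θ β : ℝ) (hα : 0 < α)
    (hβ : β = 1 - 1 / (2 * α)) (hθ : Irrational θ)
    (h : AsympUniformlyDiscrete β (spiralLattice α θ)) :
    BadlyApproximable θ := by
  by_contra hbad
  obtain ⟨s, hs, hdiscrete⟩ := h
  obtain ⟨M, -, hM⟩ := hdiscrete (s / 2) (half_pos hs) (half_lt_self hs)
  obtain ⟨N, hN⟩ := (((tendsto_rpow_atTop hα).comp tendsto_natCast_atTop_atTop).eventually_ge_atTop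
    M).exists_forall_of_atTop
  obtain ⟨n, q, hn, hq, hnear⟩ := exists_spiralPoint_add_near hα hθ hbad (half_pos hs) (max N 1)
  have hn_one : 1 ≤ n := le_of_max_le_right hn
  have hfar : M ≤ ‖spiralPoint α θ n‖ := norm_spiralPoint α θ n ▸ hN n (le_of_max_le_left hn)
  have hcenter : ‖spiralPoint α θ n - spiralPoint α θ n‖ < s / 2 * ‖spiralPoint α θ n‖ ^ β := by
    rw [sub_self, norm_zero]
    exact mul_pos (half_pos hs) (rpow_pos_of_pos (zero_lt_one.trans_le (one_le_norm_spiralPoint hα.le θ hn_one)) _)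
  subst hβ
  have hsame : spiralPoint α θ n = spiralPoint α θ (n + q) :=
    hM _ hfar ⟨spiralPoint_mem_spiralLattice α θ n, one_le_norm_spiralPoint hα.le θ hn_one, hcenter⟩
      ⟨spiralPoint_mem_spiralLattice α θ (n + q), one_le_norm_spiralPoint hα.le θ (by omega),
        by rwa [norm_sub_rev]⟩
  exact (norm_spiralPoint_strictMono hα θ (Nat.lt_add_of_pos_right hq)).ne
    (congrArg norm hsame)
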